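/- arXiv:2311.13415 — 6 statements merged into one kernel-verified Lean document; each statement's English description precedes it below -/
import Mathlib

section
/- Let H be a commutative ℚ-algebra. The ℚ-vector space with basis {D_{m,n}(λ)} for m ∈ ℤ, n ≥ 0, λ ranging over a basis of H, together with a central element c, equipped with the bracket [D_{m,n}(λ), D_{m',n'}(μ)] = (n m' − m n') · D_{m+m', n+n'−1}(λμ), where by convention D_{m,−1}(λ) := δ_{m,0} · ε(λ) · c for a fixed ℚ-linear functional ε on H, is a Lie algebra; i.e., the bracket is alternating and satisfies the Jacobi identity. -/
/-- The underlying vector space of the (non-deformed) Lie algebra `𝔴(S)`: it has basis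
`D_{m,n}(λ)` for `m ∈ ℤ`, `n ≥ 0`, `λ` running through a basis of `H` (encoded as the
`H`-valued finitely supported functions on `ℤ × ℕ`), together with a central element `c`
(the `ℚ`-component). -/
abbrev WSpace (H : Type*) [CommRing H] [Algebra ℚ H] := ((ℤ × ℕ) →₀ H) × ℚ

/-- The bracket of generators: `[D_{m,n}(λ), D_{m',n'}(μ)] = (n m' − m n') D_{m+m', n+n'−1}(λμ)`,
with the convention `D_{m,−1}(λ) := δ_{m,0} ⬝ ε(λ) ⬝ c`. -/
noncomputable def wGen {H : Type*} [CommRing H] [Algebra ℚ H] (ε : H →ₗ[ℚ] ℚ)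
    (p : ℤ × ℕ) (lam : H) (q : ℤ × ℕ) (mu : H) : WSpace H :=
  let coef : ℤ := (p.2 : ℤ) * q.1 - p.1 * (q.2 : ℤ)
  if p.2 + q.2 = 0 then
    (0, if p.1 + q.1 = 0 then (coef : ℚ) * ε (lam * mu) else 0)
  else
    (Finsupp.single (p.1 + q.1, p.2 + q.2 - 1) (coef • (lam * mu)), 0)

/-- The bilinear extension of the bracket on generators to all of `WSpace H`
(the central element `c` brackets to zero with everything). -/
noncomputable def wBr {H : Type*} [CommRing H] [Algebra ℚ H] (ε : H →ₗ[ℚ] ℚ)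
    (x y : WSpace H) : WSpace H :=
  x.1.sum fun p lam => y.1.sum fun q mu => wGen ε p lam q mu

section WSpaceAux

variable {H : Type*} [CommRing H] [Algebra ℚ H] (ε : H →ₗ[ℚ] ℚ)

lemma wGen_zero_right (p q : ℤ × ℕ) (lam : H) : wGen ε p lam q 0 = 0 := by
  unfold wGen; split <;> simp

lemma wGen_add_right (p q : ℤ × ℕ) (lam mu nu : H) :
    wGen ε p lam q (mu + nu) = wGen ε p lam q mu + wGen ε p lam q nu := by
  unfold wGen
  dsimp only
  split
  · simp only [Prod.mk_add_mk, Prod.mk.injEq, add_zero, true_and]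
    split <;> simp [mul_add]
  · simp [mul_add, smul_add, Finsupp.single_add, Prod.ext_iff]

lemma wGen_swap (p q : ℤ × ℕ) (lam mu : H) :
    wGen ε q mu p lam = - wGen ε p lam q mu := by
  unfold wGen
  dsimp only
  rw [add_comm q.2 p.2, add_comm q.1 p.1, mul_comm mu lam]
  have hc : (q.2 : ℤ) * p.1 - q.1 * (p.2 : ℤ) = -((p.2 : ℤ) * q.1 - p.1 * (q.2 : ℤ)) := by ring
  rw [hc]
  split
  · simp only [Prod.neg_mk, neg_zero, Prod.mk.injEq, true_and]
    split <;> push_cast <;> ring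
  · rw [neg_smul, Finsupp.single_neg, Prod.neg_mk, neg_zero]

/-- Bracketing with a fixed generator on the left, as an additive map. -/
noncomputable def wL (p : ℤ × ℕ) (lam : H) : WSpace H →+ WSpace H where
  toFun y := y.1.sum fun q mu => wGen ε p lam q mu
  map_zero' := by simp
  map_add' a b := by
    simp only [Prod.fst_add]
    exact Finsupp.sum_add_index' (fun q => wGen_zero_right ε p q lam)
      (fun q b₁ b₂ => wGen_add_right ε p q lam b₁ b₂)

lemma wBr_eq (x y : WSpace H) : wBr ε x y = x.1.sum fun p lam => wL ε p lam y := rfl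

lemma wBr_swap (x y : WSpace H) : wBr ε y x = - wBr ε x y := by
  unfold wBr
  rw [Finsupp.sum_comm]
  simp only [Finsupp.sum, ← Finset.sum_neg_distrib]
  refine Finset.sum_congr rfl fun q _ => Finset.sum_congr rfl fun p _ => ?_
  exact wGen_swap ε q p (x.1 q) (y.1 p)

lemma wBr_self (x : WSpace H) : wBr ε x x = 0 := by
  have h := wBr_swap ε x x
  have h2 : (2 : ℚ) • wBr ε x x = 0 := by
    rw [two_smul]; nth_rewrite 1 [h]; rw [neg_add_cancel]
  have := congrArg (fun z => (2 : ℚ)⁻¹ • z) h2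
  simpa [smul_smul] using this

lemma wBr_central (x : WSpace H) (a : ℚ) : wBr ε x (0, a) = 0 ∧ wBr ε (0, a) x = 0 := by
  constructor
  · unfold wBr; simp
  · unfold wBr; simp [Finsupp.sum_zero_index]

lemma wL_wGen (p q r : ℤ × ℕ) (lam mu nu : H) :
    wL ε p lam (wGen ε q mu r nu) =
      if q.2 + r.2 = 0 then 0
      else wGen ε p lam (q.1 + r.1, q.2 + r.2 - 1)
        (((q.2 : ℤ) * r.1 - q.1 * (r.2 : ℤ)) • (mu * nu)) := by
  by_cases h : q.2 + r.2 = 0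
  · rw [if_pos h]
    have h0 : (wGen ε q mu r nu).1 = 0 := by
      unfold wGen; dsimp only; rw [if_pos h]
    show (wGen ε q mu r nu).1.sum (fun s τ => wGen ε p lam s τ) = 0
    rw [h0, Finsupp.sum_zero_index]
  · rw [if_neg h]
    have h0 : wGen ε q mu r nu =
        (Finsupp.single (q.1 + r.1, q.2 + r.2 - 1)
          (((q.2 : ℤ) * r.1 - q.1 * (r.2 : ℤ)) • (mu * nu)), 0) := by
      unfold wGen; dsimp only; rw [if_neg h]
    show (wGen ε q mu r nu).1.sum (fun s τ => wGen ε p lam s τ) = _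
    rw [h0]
    exact Finsupp.sum_single_index (wGen_zero_right ε p _ lam)

set_option maxHeartbeats 1000000 in
lemma wG_cyclic (m1 m2 m3 : ℤ) (n1 n2 n3 : ℕ) (lam mu nu : H) :
    wL ε (m1, n1) lam (wGen ε (m2, n2) mu (m3, n3) nu) +
    wL ε (m2, n2) mu (wGen ε (m3, n3) nu (m1, n1) lam) +
    wL ε (m3, n3) nu (wGen ε (m1, n1) lam (m2, n2) mu) = 0 := by
  rw [wL_wGen, wL_wGen, wL_wGen]
  unfold wGen
  dsimp only
  split_ifs
  all_goals try (exfalso; omega)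
  all_goals first
  | (simp
     done)
  | (simp_all
     done)
  | skip
  -- four remaining goals: sums of `Finsupp.single`s
  · -- n2 = n3 = 0, terms 2 and 3 present
    obtain ⟨rfl, rfl⟩ : n2 = 0 ∧ n3 = 0 := (by omega)
    rw [show ((m3 + (m1 + m2), 0 + (n1 + 0 - 1) - 1) : ℤ × ℕ)
          = (m2 + (m3 + m1), 0 + (0 + n1 - 1) - 1) from by rw [Prod.mk.injEq]; omega,
      show ((0 + n1 - 1 : ℕ) : ℤ) = (n1 : ℤ) - 1 from by omega,
      show ((n1 + 0 - 1 : ℕ) : ℤ) = (n1 : ℤ) - 1 from by omega]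
    simp only [mul_smul_comm, smul_smul,
      show mu * (nu * lam) = lam * (mu * nu) from by ring,
      show nu * (lam * mu) = lam * (mu * nu) from by ring]
    rw [zero_add, Prod.mk_add_mk, ← Finsupp.single_add, ← add_smul]
    simp only [Prod.mk_eq_zero, add_zero]
    refine ⟨?_, trivial⟩
    rw [Finsupp.single_eq_zero]
    convert zero_smul ℤ (lam * (mu * nu)) using 2
    push_cast
    ring
  · -- n3 = n1 = 0, terms 1 and 3 present
    obtain ⟨rfl, rfl⟩ : n3 = 0 ∧ n1 = 0 := (by omega)
    rw [show ((m3 + (m1 + m2), 0 + (0 + n2 - 1) - 1) : ℤ × ℕ)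
          = (m1 + (m2 + m3), 0 + (n2 + 0 - 1) - 1) from by rw [Prod.mk.injEq]; omega,
      show ((n2 + 0 - 1 : ℕ) : ℤ) = (n2 : ℤ) - 1 from by omega,
      show ((0 + n2 - 1 : ℕ) : ℤ) = (n2 : ℤ) - 1 from by omega]
    simp only [mul_smul_comm, smul_smul,
      show mu * (nu * lam) = lam * (mu * nu) from by ring,
      show nu * (lam * mu) = lam * (mu * nu) from by ring]
    rw [add_zero, Prod.mk_add_mk, ← Finsupp.single_add, ← add_smul]
    simp only [Prod.mk_eq_zero, add_zero]
    refine ⟨?_, trivial⟩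
    rw [Finsupp.single_eq_zero]
    convert zero_smul ℤ (lam * (mu * nu)) using 2
    push_cast
    ring
  · -- n1 = n2 = 0, terms 1 and 2 present
    obtain ⟨rfl, rfl⟩ : n1 = 0 ∧ n2 = 0 := (by omega)
    rw [show ((m2 + (m3 + m1), 0 + (n3 + 0 - 1) - 1) : ℤ × ℕ)
          = (m1 + (m2 + m3), 0 + (0 + n3 - 1) - 1) from by rw [Prod.mk.injEq]; omega,
      show ((0 + n3 - 1 : ℕ) : ℤ) = (n3 : ℤ) - 1 from by omega,
      show ((n3 + 0 - 1 : ℕ) : ℤ) = (n3 : ℤ) - 1 from by omega]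
    simp only [mul_smul_comm, smul_smul,
      show mu * (nu * lam) = lam * (mu * nu) from by ring,
      show nu * (lam * mu) = lam * (mu * nu) from by ring]
    rw [add_zero, Prod.mk_add_mk, ← Finsupp.single_add, ← add_smul]
    simp only [Prod.mk_eq_zero, add_zero]
    refine ⟨?_, trivial⟩
    rw [Finsupp.single_eq_zero]
    convert zero_smul ℤ (lam * (mu * nu)) using 2
    push_cast
    ring
  · -- all three terms present
    rw [show ((m2 + (m3 + m1), n2 + (n3 + n1 - 1) - 1) : ℤ × ℕ)
          = (m1 + (m2 + m3), n1 + (n2 + n3 - 1) - 1) from by rw [Prod.mk.injEq]; omega,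
      show ((m3 + (m1 + m2), n3 + (n1 + n2 - 1) - 1) : ℤ × ℕ)
          = (m1 + (m2 + m3), n1 + (n2 + n3 - 1) - 1) from by rw [Prod.mk.injEq]; omega,
      show ((n2 + n3 - 1 : ℕ) : ℤ) = (n2 : ℤ) + n3 - 1 from by omega,
      show ((n3 + n1 - 1 : ℕ) : ℤ) = (n3 : ℤ) + n1 - 1 from by omega,
      show ((n1 + n2 - 1 : ℕ) : ℤ) = (n1 : ℤ) + n2 - 1 from by omega]
    simp only [mul_smul_comm, smul_smul,
      show mu * (nu * lam) = lam * (mu * nu) from by ring,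
      show nu * (lam * mu) = lam * (mu * nu) from by ring]
    rw [Prod.mk_add_mk, Prod.mk_add_mk, ← Finsupp.single_add, ← Finsupp.single_add,
      ← add_smul, ← add_smul]
    simp only [Prod.mk_eq_zero, add_zero]
    refine ⟨?_, trivial⟩
    rw [Finsupp.single_eq_zero]
    convert zero_smul ℤ (lam * (mu * nu)) using 2
    ring


lemma wL_wBr (p : ℤ × ℕ) (lam : H) (y z : WSpace H) :
    wL ε p lam (wBr ε y z) =
      y.1.sum fun q mu => z.1.sum fun r nu => wL ε p lam (wGen ε q mu r nu) := by
  show wL ε p lam (y.1.sum fun q mu => z.1.sum fun r nu => wGen ε q mu r nu) = _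
  rw [map_finsuppSum]
  exact Finsupp.sum_congr fun q _ => map_finsuppSum _ _ _

lemma wBr_jacobi (x y z : WSpace H) :
    wBr ε x (wBr ε y z) + wBr ε y (wBr ε z x) + wBr ε z (wBr ε x y) = 0 := by
  have h1 : wBr ε x (wBr ε y z) =
      x.1.sum fun p lam => y.1.sum fun q mu => z.1.sum fun r nu =>
        wL ε p lam (wGen ε q mu r nu) := by
    rw [wBr_eq]
    exact Finsupp.sum_congr fun p _ => wL_wBr ε p _ y z
  have h2 : wBr ε y (wBr ε z x) =
      x.1.sum fun p lam => y.1.sum fun q mu => z.1.sum fun r nu =>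
        wL ε q mu (wGen ε r nu p lam) := by
    rw [wBr_eq]
    rw [show (y.1.sum fun q mu => wL ε q mu (wBr ε z x)) =
        y.1.sum fun q mu => x.1.sum fun p lam => z.1.sum fun r nu =>
          wL ε q mu (wGen ε r nu p lam) from
      Finsupp.sum_congr fun q _ => by
        rw [wL_wBr ε q _ z x]; exact Finsupp.sum_comm _ _ _]
    exact Finsupp.sum_comm _ _ _
  have h3 : wBr ε z (wBr ε x y) =
      x.1.sum fun p lam => y.1.sum fun q mu => z.1.sum fun r nu =>
        wL ε r nu (wGen ε p lam q mu) := by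
    rw [wBr_eq]
    rw [show (z.1.sum fun r nu => wL ε r nu (wBr ε x y)) =
        z.1.sum fun r nu => x.1.sum fun p lam => y.1.sum fun q mu =>
          wL ε r nu (wGen ε p lam q mu) from
      Finsupp.sum_congr fun r _ => wL_wBr ε r _ x y]
    exact (Finsupp.sum_comm _ _ _).trans
      (Finsupp.sum_congr fun p _ => Finsupp.sum_comm _ _ _)
  rw [h1, h2, h3]
  simp only [Finsupp.sum]
  rw [← Finset.sum_add_distrib, ← Finset.sum_add_distrib]
  refine Finset.sum_eq_zero fun p _ => ?_
  rw [← Finset.sum_add_distrib, ← Finset.sum_add_distrib]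
  refine Finset.sum_eq_zero fun q _ => ?_
  rw [← Finset.sum_add_distrib, ← Finset.sum_add_distrib]
  refine Finset.sum_eq_zero fun r _ => ?_
  obtain ⟨m1, n1⟩ := p
  obtain ⟨m2, n2⟩ := q
  obtain ⟨m3, n3⟩ := r
  exact wG_cyclic ε m1 m2 m3 n1 n2 n3 _ _ _

end WSpaceAux

/-- Let `H` be a commutative `ℚ`-algebra and `ε : H → ℚ` a linear functional. The
`ℚ`-vector space with basis `{D_{m,n}(λ)}` (`m ∈ ℤ`, `n ≥ 0`, `λ` in a basis of `H`)
together with a central element `c`, with bracket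
`[D_{m,n}(λ), D_{m',n'}(μ)] = (n m' − m n') D_{m+m', n+n'−1}(λμ)` and convention
`D_{m,−1}(λ) := δ_{m,0} ε(λ) c`, is a Lie algebra: the bracket is alternating, satisfies
the Jacobi identity, and `c` is central. -/
theorem statement5 (H : Type*) [CommRing H] [Algebra ℚ H] (ε : H →ₗ[ℚ] ℚ) :
    (∀ x : WSpace H, wBr ε x x = 0) ∧
    (∀ x y z : WSpace H,
      wBr ε x (wBr ε y z) + wBr ε y (wBr ε z x) + wBr ε z (wBr ε x y) = 0) ∧
    (∀ (x : WSpace H) (a : ℚ), wBr ε x (0, a) = 0 ∧ wBr ε (0, a) x = 0) :=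
  ⟨wBr_self ε, wBr_jacobi ε, wBr_central ε⟩
end

section
/- Let H be a commutative ℚ-algebra and q ∈ H. (a) For all m, m' ≥ 0 and n, n' ≥ 0, the polynomial (D + m'q)^n · D^{n'} − D^n · (D + mq)^{n'} in H[D] is divisible by q, with quotient equal to Σ_{i=1}^{n} binom(n,i) (m')^i D^{n+n'−i} q^{i−1} − Σ_{j=1}^{n'} binom(n',j) m^j D^{n+n'−j} q^{j−1}. (b) The bracket on the free H-module with basis {z^m D^n : m ≥ 1, n ≥ 0} defined by [z^m D^n λ, z^{m'} D^{n'} μ] = z^{m+m'} · ((D + m'q)^n D^{n'} − D^n (D + mq)^{n'})/q · λμ (interpreting the quotient via part (a)) satisfies the Jacobi identity. -/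
open Polynomial

/-- The free `H`-module with basis `{z^m D^n : m ≥ 1, n ≥ 0}`, encoded as finitely
supported `H`-valued functions on `ℕ+ × ℕ`. -/
abbrev SemiDefW (H : Type*) [CommRing H] [Algebra ℚ H] := (ℕ+ × ℕ) →₀ H

/-- The bracket of generators of the semi-deformed Lie algebra:
`[z^m D^n λ, z^{m'} D^{n'} μ]` equals `z^{m+m'}` times the quotient
`((D + m'q)^n D^{n'} − D^n (D + mq)^{n'})/q` applied to `λμ`, expanded in the basis via
part (a) of the statement. -/
noncomputable def sdGen {H : Type*} [CommRing H] [Algebra ℚ H] (q : H)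
    (p : ℕ+ × ℕ) (lam : H) (r : ℕ+ × ℕ) (mu : H) : SemiDefW H :=
  (∑ i ∈ Finset.Icc 1 p.2,
      (p.2.choose i * ((r.1 : ℕ)) ^ i) •
        Finsupp.single (p.1 + r.1, p.2 + r.2 - i) (q ^ (i - 1) * (lam * mu)))
  - ∑ j ∈ Finset.Icc 1 r.2,
      (r.2.choose j * ((p.1 : ℕ)) ^ j) •
        Finsupp.single (p.1 + r.1, p.2 + r.2 - j) (q ^ (j - 1) * (lam * mu))

/-- The bilinear extension of `sdGen` to the whole module. -/
noncomputable def sdBr {H : Type*} [CommRing H] [Algebra ℚ H] (q : H)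
    (x y : SemiDefW H) : SemiDefW H :=
  x.sum fun p lam => y.sum fun r mu => sdGen q p lam r mu

/-!
Part (a) is the binomial theorem. For (b), let `z` and `D` act on `ℤ → H[X]` by
`(z f) b = f (b - 1)` and `(D f) b = (X + b q) f b`. Then `D z = z (D + q)`, so the operators
`z^m D^n` multiply like the symbols of the statement, `z^m D^n λ ↦ λ z^m D^n` is a faithful
representation, and it sends `q [x, y]` to the commutator of the images. Hence `q² J(x, y, z)`
maps to a Jacobi sum of commutators, which vanishes, and `J = 0` as soon as `q` is a
nonzerodivisor. The general case is the specialization `X ↦ q` of the universal case over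
`H[X]`, since the bracket commutes with base change.
-/

theorem Finset.sum_range_succ_eq_add_sum_Icc {M : Type*} [AddCommMonoid M] (f : ℕ → M) (n : ℕ) :
    ∑ i ∈ Finset.range (n + 1), f i = f 0 + ∑ i ∈ Finset.Icc 1 n, f i := by
  rw [Finset.range_eq_Ico, Finset.sum_eq_sum_Ico_succ_bot n.succ_pos, zero_add,
    Nat.succ_eq_add_one, Finset.Ico_add_one_right_eq_Icc]

theorem Finsupp.smul_sum_Icc_smul_single_pow_pred {α H : Type*} [CommSemiring H] (q a : H)
    (N : ℕ) (c : ℕ → ℕ) (k : ℕ → α) :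
    q • ∑ i ∈ Finset.Icc 1 N, c i • Finsupp.single (k i) (q ^ (i - 1) * a) =
      ∑ i ∈ Finset.Icc 1 N, c i • Finsupp.single (k i) (q ^ i * a) := by
  rw [Finset.smul_sum]
  refine Finset.sum_congr rfl fun i hi => ?_
  rw [smul_comm, Finsupp.smul_single, smul_eq_mul, ← mul_assoc, ← pow_succ',
    Nat.sub_add_cancel (Finset.mem_Icc.mp hi).1]

section

variable {H : Type*} [CommRing H]

theorem Polynomial.X_add_C_pow_mul_X_pow (q : H) (m n n' : ℕ) :
    (X + C (m • q)) ^ n * X ^ n' = X ^ (n + n') + C q *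
      ∑ i ∈ Finset.Icc 1 n, (n.choose i * m ^ i) • (X ^ (n + n' - i) * C (q ^ (i - 1))) := by
  rw [add_comm X, add_pow, Finset.sum_range_succ_eq_add_sum_Icc, add_mul, Finset.sum_mul,
    Finset.mul_sum]
  congr 1
  · simp [pow_add]
  refine Finset.sum_congr rfl fun i hi => ?_
  obtain ⟨k, rfl⟩ := Nat.exists_eq_add_of_le' (Finset.mem_Icc.mp hi).1
  rw [show n + n' - (k + 1) = n - (k + 1) + n' by grind]
  simp only [nsmul_eq_mul, C_mul, C_pow, map_natCast, Nat.add_sub_cancel, pow_add]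
  push_cast
  ring

namespace SemiDefW

noncomputable def shiftOp : Module.End H (ℤ → H[X]) := LinearMap.funLeft H H[X] (· - 1)

noncomputable def dOp (q : H) : Module.End H (ℤ → H[X]) :=
  LinearMap.pi fun b => LinearMap.mulLeft H (X + C ((b : H) * q)) ∘ₗ LinearMap.proj b

theorem dOp_mul_shiftOp (q : H) :
    dOp q * shiftOp = shiftOp * (dOp q + algebraMap H _ q) := by
  refine LinearMap.ext fun f => funext fun b => ?_
  simp [shiftOp, dOp, LinearMap.funLeft, Algebra.algebraMap_eq_smul_one, smul_eq_C_mul]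
  ring

theorem dOp_mul_shiftOp_pow (q : H) (m : ℕ) :
    dOp q * shiftOp ^ m = shiftOp ^ m * (dOp q + algebraMap H _ (m * q)) := by
  induction m with
  | zero => simp
  | succ m ih =>
    rw [pow_succ, ← mul_assoc, ih, mul_assoc, add_mul, Algebra.commutes, dOp_mul_shiftOp]
    simp only [Nat.cast_succ, add_mul, one_mul, map_add]
    noncomm_ring

theorem dOp_pow_mul_shiftOp_pow (q : H) (n m : ℕ) :
    dOp q ^ n * shiftOp ^ m = shiftOp ^ m * (algebraMap H _ (m * q) + dOp q) ^ n := by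
  have h : SemiconjBy (shiftOp ^ m) (algebraMap H _ (m * q) + dOp q) (dOp q) := by
    rw [SemiconjBy, dOp_mul_shiftOp_pow, add_comm]
  exact (h.pow_right n).symm

theorem dOp_pow_single_zero (q : H) (n : ℕ) (f : H[X]) :
    (dOp q ^ n) (Pi.single 0 f) = Pi.single 0 (X ^ n * f) := by
  induction n with
  | zero => simp
  | succ n ih =>
    rw [pow_succ', Module.End.mul_apply, ih, pow_succ', mul_assoc]
    ext b : 1
    by_cases hb : b = 0 <;> simp [dOp, hb]

theorem shiftOp_pow_single (m : ℕ) (a : ℤ) (f : H[X]) :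
    (shiftOp ^ m) (Pi.single a f) = Pi.single (a + m) f := by
  induction m with
  | zero => simp
  | succ m ih =>
    rw [pow_succ', Module.End.mul_apply, ih]
    ext b : 1
    simp [shiftOp, LinearMap.funLeft, Pi.single_apply, sub_eq_iff_eq_add, add_assoc]

noncomputable def genOp (q : H) (p : ℕ+ × ℕ) : Module.End H (ℤ → H[X]) :=
  shiftOp ^ (p.1 : ℕ) * dOp q ^ p.2

noncomputable def rep (q : H) : (ℕ+ × ℕ →₀ H) →ₗ[H] Module.End H (ℤ → H[X]) :=
  Finsupp.linearCombination H (genOp q)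

theorem rep_single (q : H) (p : ℕ+ × ℕ) (l : H) :
    rep q (Finsupp.single p l) = l • genOp q p :=
  Finsupp.linearCombination_single H l p

/-- `z^m D^n · z^{m'} D^{n'} = z^{m+m'} (D + m' q)^n D^{n'}`, expanded binomially. -/
noncomputable def genMul (q : H) (p r : ℕ+ × ℕ) : ℕ+ × ℕ →₀ H :=
  ∑ i ∈ Finset.range (p.2 + 1),
    (p.2.choose i * (r.1 : ℕ) ^ i) • Finsupp.single (p.1 + r.1, p.2 + r.2 - i) (q ^ i)

theorem genOp_mul_genOp (q : H) (p r : ℕ+ × ℕ) :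
    genOp q p * genOp q r = rep q (genMul q p r) := by
  rw [genOp, genOp, mul_assoc, ← mul_assoc (dOp q ^ p.2), dOp_pow_mul_shiftOp_pow,
    (Algebra.commute_algebraMap_left _ _).add_pow, genMul, map_sum, Finset.mul_sum,
    Finset.sum_mul, Finset.mul_sum]
  refine Finset.sum_congr rfl fun i _ => ?_
  rw [map_nsmul, rep_single, genOp, PNat.add_coe, pow_add,
    show p.2 + r.2 - i = p.2 - i + r.2 by grind, pow_add]
  simp only [← map_pow, ← Algebra.smul_def, ← nsmul_eq_mul', smul_mul_assoc, mul_smul_comm,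
    ← mul_assoc, ← Nat.cast_smul_eq_nsmul H, smul_smul]
  congr 1
  push_cast
  ring

theorem coeff_rep_apply_single_zero_one (q : H) (x : ℕ+ × ℕ →₀ H) (p : ℕ+ × ℕ) :
    (rep q x (Pi.single 0 1) ((p.1 : ℕ) : ℤ)).coeff p.2 = x p := by
  induction x using Finsupp.induction_linear with
  | zero => simp
  | add x y hx hy =>
    simp only [map_add, LinearMap.add_apply, Pi.add_apply, coeff_add, hx, hy, Finsupp.add_apply]
  | single r l =>
    rw [rep_single, LinearMap.smul_apply, genOp, Module.End.mul_apply, dOp_pow_single_zero,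
      shiftOp_pow_single, zero_add, mul_one]
    by_cases hr : r = p
    · simp [hr]
    · rw [Finsupp.single_eq_of_ne' hr]
      by_cases h1 : r.1 = p.1
      · have h2 : p.2 ≠ r.2 := fun h2 => hr (Prod.ext h1 h2.symm)
        simp [h1, coeff_X_pow, h2]
      · simp [h1]

theorem rep_injective (q : H) : Function.Injective (rep q) := fun x y h => by
  ext p
  rw [← coeff_rep_apply_single_zero_one q x p, ← coeff_rep_apply_single_zero_one q y p, h]

section Bracket

variable [Algebra ℚ H]

theorem sdGen_eq_smul (q : H) (p : ℕ+ × ℕ) (lam : H) (r : ℕ+ × ℕ) (mu : H) :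
    sdGen q p lam r mu = (lam * mu) • sdGen q p 1 r 1 := by
  simp only [sdGen, smul_sub, Finset.smul_sum, smul_comm (lam * mu) (_ : ℕ), Finsupp.smul_single,
    smul_eq_mul, mul_one, mul_comm (lam * mu)]

noncomputable def sdBrₗ (q : H) : SemiDefW H →ₗ[H] SemiDefW H →ₗ[H] SemiDefW H :=
  Finsupp.linearCombination H fun p => Finsupp.linearCombination H fun r => sdGen q p 1 r 1

theorem sdBr_eq_sdBrₗ (q : H) (x y : SemiDefW H) : sdBr q x y = sdBrₗ q x y := by
  simp only [sdBr, sdBrₗ, Finsupp.linearCombination_apply, LinearMap.finsupp_sum_apply,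
    LinearMap.smul_apply, Finsupp.smul_sum, smul_smul]
  simp only [← sdGen_eq_smul]

theorem sdBrₗ_single_single (q : H) (p r : ℕ+ × ℕ) (l m : H) :
    sdBrₗ q (Finsupp.single p l) (Finsupp.single r m) = (l * m) • sdGen q p 1 r 1 := by
  rw [sdBrₗ, Finsupp.linearCombination_single, LinearMap.smul_apply,
    Finsupp.linearCombination_single, smul_smul]

theorem smul_sdGen_one_one (q : H) (p r : ℕ+ × ℕ) :
    q • sdGen q p 1 r 1 = genMul q p r - genMul q r p := by
  rw [sdGen, smul_sub, Finsupp.smul_sum_Icc_smul_single_pow_pred,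
    Finsupp.smul_sum_Icc_smul_single_pow_pred, genMul, genMul,
    Finset.sum_range_succ_eq_add_sum_Icc, Finset.sum_range_succ_eq_add_sum_Icc,
    add_comm r.1, add_comm r.2]
  simp only [Nat.choose_zero_right, pow_zero, mul_one, one_smul, Nat.sub_zero]
  abel

theorem rep_smul_sdBr (q : H) (x y : SemiDefW H) :
    rep q (q • sdBr q x y) = rep q x * rep q y - rep q y * rep q x := by
  rw [sdBr_eq_sdBrₗ]
  induction x using Finsupp.induction_linear with
  | zero => simp
  | add x x' hx hx' =>
    simp only [map_add, LinearMap.add_apply, smul_add, hx, hx', add_mul, mul_add]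
    abel
  | single p l =>
    induction y using Finsupp.induction_linear with
    | zero => simp
    | add y y' hy hy' =>
      simp only [map_add, smul_add, hy, hy', add_mul, mul_add]
      abel
    | single r m =>
      rw [sdBrₗ_single_single, smul_comm, map_smul, smul_sdGen_one_one, map_sub,
        ← genOp_mul_genOp, ← genOp_mul_genOp, rep_single, rep_single]
      simp only [smul_mul_smul_comm, mul_comm m l, smul_sub]

theorem mul_smul_sdBr_sdBr (q : H) (x y z : SemiDefW H) :
    (q * q) • sdBr q x (sdBr q y z) = q • sdBr q x (q • sdBr q y z) := by
  rw [mul_smul, sdBr_eq_sdBrₗ q x, sdBr_eq_sdBrₗ q x, map_smul]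

theorem sdBr_jacobi_of_isSMulRegular (q : H) (hq : IsSMulRegular H q) (x y z : SemiDefW H) :
    sdBr q x (sdBr q y z) + sdBr q y (sdBr q z x) + sdBr q z (sdBr q x y) = 0 := by
  refine (hq.finsupp.mul hq.finsupp).right_eq_zero_of_smul (rep_injective q ?_)
  simp only [smul_add, map_add, mul_smul_sdBr_sdBr, rep_smul_sdBr, map_zero, mul_sub, sub_mul,
    mul_assoc]
  abel

theorem mapRange_sdGen {S : Type*} [CommRing S] [Algebra ℚ S] (φ : H →+* S) (q : H)
    (p : ℕ+ × ℕ) (l : H) (r : ℕ+ × ℕ) (m : H) :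
    Finsupp.mapRange φ (map_zero φ) (sdGen q p l r m) = sdGen (φ q) p (φ l) r (φ m) := by
  change Finsupp.mapRange.addMonoidHom φ.toAddMonoidHom _ = _
  simp only [sdGen, map_sub, map_sum, map_nsmul, Finsupp.mapRange.addMonoidHom_apply,
    Finsupp.mapRange_single]
  simp

theorem mapRange_sdBr {S : Type*} [CommRing S] [Algebra ℚ S] (φ : H →+* S) (q : H)
    (x y : SemiDefW H) :
    Finsupp.mapRange φ (map_zero φ) (sdBr q x y) =
      sdBr (φ q) (Finsupp.mapRange φ (map_zero φ) x) (Finsupp.mapRange φ (map_zero φ) y) := by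
  simp only [sdBr_eq_sdBrₗ]
  induction x using Finsupp.induction_linear with
  | zero => simp
  | add x x' hx hx' =>
    simp only [map_add, LinearMap.add_apply, Finsupp.mapRange_add (map_add φ), hx, hx']
  | single p l =>
    induction y using Finsupp.induction_linear with
    | zero => simp
    | add y y' hy hy' => simp only [map_add, Finsupp.mapRange_add (map_add φ), hy, hy']
    | single r m =>
      rw [Finsupp.mapRange_single, Finsupp.mapRange_single, sdBrₗ_single_single,
        sdBrₗ_single_single, ← sdGen_eq_smul, ← sdGen_eq_smul, mapRange_sdGen]

theorem sdBr_jacobi (q : H) (x y z : SemiDefW H) :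
    sdBr q x (sdBr q y z) + sdBr q y (sdBr q z x) + sdBr q z (sdBr q x y) = 0 := by
  have hlift : ∀ v : SemiDefW H,
      Finsupp.mapRange (evalRingHom q) (map_zero _) (Finsupp.mapRange C C_0 v) = v := fun v => by
    ext; simp
  have hX : evalRingHom q X = q := eval_X
  have hJ := sdBr_jacobi_of_isSMulRegular X isRegular_X.left.isSMulRegular
    (Finsupp.mapRange C C_0 x) (Finsupp.mapRange C C_0 y) (Finsupp.mapRange C C_0 z)
  apply_fun Finsupp.mapRange (evalRingHom q) (map_zero _) at hJ
  simpa only [Finsupp.mapRange_add (map_add _), mapRange_sdBr, hlift, hX, Finsupp.mapRange_zero]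
    using hJ

end Bracket

end SemiDefW

end

/-- Let `H` be a commutative `ℚ`-algebra and `q ∈ H`.
(a) For all `m, m', n, n' ≥ 0`, in `H[D]` the polynomial
`(D + m'q)^n D^{n'} − D^n (D + mq)^{n'}` equals `q` times
`Σ_{i=1}^{n} binom(n,i) (m')^i D^{n+n'−i} q^{i−1} − Σ_{j=1}^{n'} binom(n',j) m^j D^{n+n'−j} q^{j−1}`
(so it is divisible by `q` with the stated quotient).
(b) The bracket on the free `H`-module with basis `{z^m D^n : m ≥ 1, n ≥ 0}` given by
`[z^m D^n λ, z^{m'} D^{n'} μ] = z^{m+m'} ((D + m'q)^n D^{n'} − D^n (D + mq)^{n'})/q ⬝ λμ`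
satisfies the Jacobi identity. -/
theorem statement6 (H : Type*) [CommRing H] [Algebra ℚ H] (q : H) :
    (∀ m m' n n' : ℕ,
      (Polynomial.X + Polynomial.C (m' • q)) ^ n * Polynomial.X ^ n'
        - Polynomial.X ^ n * (Polynomial.X + Polynomial.C (m • q)) ^ n' =
      Polynomial.C q *
        ((∑ i ∈ Finset.Icc 1 n,
            (n.choose i * m' ^ i) •
              (Polynomial.X ^ (n + n' - i) * Polynomial.C (q ^ (i - 1))))
          - ∑ j ∈ Finset.Icc 1 n',
              (n'.choose j * m ^ j) •
                (Polynomial.X ^ (n + n' - j) * Polynomial.C (q ^ (j - 1))))) ∧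
    (∀ x y z : SemiDefW H,
      sdBr q x (sdBr q y z) + sdBr q y (sdBr q z x) + sdBr q z (sdBr q x y) = 0) := by
  refine ⟨fun m m' n n' => ?_, SemiDefW.sdBr_jacobi q⟩
  rw [X_add_C_pow_mul_X_pow, mul_comm (X ^ n), X_add_C_pow_mul_X_pow, add_comm n' n]
  ring
end

section
/- Let t₁, t₂ be variables, s₂ = t₁² + t₁t₂ + t₂², s₁ = t₁ + t₂, and Ω(x,y) = y² / ((1 − y(x⁻¹ − t₁))(1 − y(x⁻¹ − t₂))) in the field ℚ(t₁, t₂, x, y). Setting z = y⁻¹ − x⁻¹, the identity (z³ − z·s₂) · (Ω(y,x) − Ω(x,y)) = s₁ · (2 − t₁t₂·(Ω(x,y) + Ω(y,x))) holds as rational functions. -/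
/-!
With `z = y⁻¹ − x⁻¹`, the denominator factors of `Ω` satisfy `1 − y(x⁻¹ − t) = y(z + t)`, so
`Ω(x,y) = 1/((z + t₁)(z + t₂))` and `Ω(y,x) = 1/((t₁ − z)(t₂ − z))`. The identity thus only involves
`z`, and clearing the denominators `P = (z + t₁)(z + t₂)`, `Q = (z − t₁)(z − t₂)` it reduces, via
`P − Q = 2 s₁ z`, `P + Q = 2 (z² + t₁t₂)` and `PQ = (z² − t₁²)(z² − t₂²)`, to a polynomial identity.
-/

/-- The field `ℚ(t₁, t₂, x, y)` of rational functions in four variables. -/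
abbrev RatF4 : Type := FractionRing (MvPolynomial (Fin 4) ℚ)

/-- The function `Ω(x,y) = y² / ((1 − y(x⁻¹ − t₁))(1 − y(x⁻¹ − t₂)))`. -/
noncomputable def OmegaFn (t1 t2 a b : RatF4) : RatF4 :=
  b ^ 2 / ((1 - b * (a⁻¹ - t1)) * (1 - b * (a⁻¹ - t2)))

theorem OmegaFn_eq_inv (t1 t2 a : RatF4) {b : RatF4} (hb : b ≠ 0) :
    OmegaFn t1 t2 a b = ((b⁻¹ - a⁻¹ + t1) * (b⁻¹ - a⁻¹ + t2))⁻¹ := by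
  have hfactor (t : RatF4) : 1 - b * (a⁻¹ - t) = b * (b⁻¹ - a⁻¹ + t) := by
    field_simp
    ring
  rw [OmegaFn, hfactor, hfactor, mul_mul_mul_comm, ← sq, div_eq_mul_inv, mul_inv,
    mul_inv_cancel_left₀ (pow_ne_zero 2 hb)]

theorem sub_cube_mul_inv_sub_inv {K : Type*} [Field K] {a b t1 t2 : K}
    (h1 : b - a + t1 ≠ 0) (h2 : b - a + t2 ≠ 0) (h3 : a - b + t1 ≠ 0) (h4 : a - b + t2 ≠ 0) :
    ((b - a) ^ 3 - (b - a) * (t1 ^ 2 + t1 * t2 + t2 ^ 2)) *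
        (((a - b + t1) * (a - b + t2))⁻¹ - ((b - a + t1) * (b - a + t2))⁻¹) =
      (t1 + t2) * (2 - t1 * t2 *
        (((b - a + t1) * (b - a + t2))⁻¹ + ((a - b + t1) * (a - b + t2))⁻¹)) := by
  field_simp
  ring

section FractionField

variable {σ R : Type*} [CommRing R]

theorem MvPolynomial.algebraMap_fractionRing_ne_zero_of_eval_ne_zero {p : MvPolynomial σ R}
    (v : σ → R) (hv : MvPolynomial.eval v p ≠ 0) :
    algebraMap (MvPolynomial σ R) (FractionRing (MvPolynomial σ R)) p ≠ 0 := by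
  rw [map_ne_zero_iff _ (IsFractionRing.injective _ _)]
  rintro rfl
  exact hv (map_zero _)

theorem MvPolynomial.algebraMap_X_ne_zero [Nontrivial R] (i : σ) :
    algebraMap (MvPolynomial σ R) (FractionRing (MvPolynomial σ R)) (X i) ≠ 0 :=
  algebraMap_fractionRing_ne_zero_of_eval_ne_zero (fun _ => 1) (by simp)

theorem MvPolynomial.inv_algebraMap_X_sub_inv_add_ne_zero [IsDomain R] [DecidableEq σ]
    {i j : σ} (hij : i ≠ j) (k : σ) :
    let Y : σ → FractionRing (MvPolynomial σ R) := fun l => algebraMap (MvPolynomial σ R) _ (X l)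
    (Y i)⁻¹ - (Y j)⁻¹ + Y k ≠ 0 := by
  intro Y
  have hY (l : σ) : Y l ≠ 0 := algebraMap_X_ne_zero l
  have hpoly : Y j - Y i + Y i * Y j * Y k ≠ 0 := by
    simp only [Y, ← map_mul, ← map_sub, ← map_add]
    refine algebraMap_fractionRing_ne_zero_of_eval_ne_zero (Pi.single j 1) ?_
    simp [Pi.single_apply, hij]
  have hfactor : (Y i)⁻¹ - (Y j)⁻¹ + Y k = (Y i * Y j)⁻¹ * (Y j - Y i + Y i * Y j * Y k) := by
    field_simp [hY i, hY j]
  rw [hfactor]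
  exact mul_ne_zero (inv_ne_zero (mul_ne_zero (hY i) (hY j))) hpoly

end FractionField

/-- With `s₂ = t₁² + t₁t₂ + t₂²`, `s₁ = t₁ + t₂` and `z = y⁻¹ − x⁻¹`, the identity
`(z³ − z s₂)(Ω(y,x) − Ω(x,y)) = s₁ (2 − t₁t₂ (Ω(x,y) + Ω(y,x)))` holds in `ℚ(t₁,t₂,x,y)`. -/
theorem statement10 :
    let t1 : RatF4 := algebraMap (MvPolynomial (Fin 4) ℚ) RatF4 (MvPolynomial.X 0)
    let t2 : RatF4 := algebraMap (MvPolynomial (Fin 4) ℚ) RatF4 (MvPolynomial.X 1)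
    let x : RatF4 := algebraMap (MvPolynomial (Fin 4) ℚ) RatF4 (MvPolynomial.X 2)
    let y : RatF4 := algebraMap (MvPolynomial (Fin 4) ℚ) RatF4 (MvPolynomial.X 3)
    let s2 : RatF4 := t1 ^ 2 + t1 * t2 + t2 ^ 2
    let s1 : RatF4 := t1 + t2
    let z : RatF4 := y⁻¹ - x⁻¹
    (z ^ 3 - z * s2) * (OmegaFn t1 t2 y x - OmegaFn t1 t2 x y) =
      s1 * (2 - t1 * t2 * (OmegaFn t1 t2 x y + OmegaFn t1 t2 y x)) := by
  intro t1 t2 x y s2 s1 z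
  rw [OmegaFn_eq_inv _ _ _ (MvPolynomial.algebraMap_X_ne_zero 2),
    OmegaFn_eq_inv _ _ _ (MvPolynomial.algebraMap_X_ne_zero 3)]
  exact sub_cube_mul_inv_sub_inv
    (MvPolynomial.inv_algebraMap_X_sub_inv_add_ne_zero (by decide) 0)
    (MvPolynomial.inv_algebraMap_X_sub_inv_add_ne_zero (by decide) 1)
    (MvPolynomial.inv_algebraMap_X_sub_inv_add_ne_zero (by decide) 0)
    (MvPolynomial.inv_algebraMap_X_sub_inv_add_ne_zero (by decide) 1)
end

section
/- With Ω(x,y) = y² / ((1 − y(x⁻¹ − t₁))(1 − y(x⁻¹ − t₂))) in ℚ(t₁, t₂, x₁, x₂, x₃), the identity (x₁⁻¹ − 2x₂⁻¹ + x₃⁻¹) · (Ω(x₁,x₂)Ω(x₂,x₃) − t₁t₂·Ω(x₁,x₂)Ω(x₂,x₃)Ω(x₁,x₃)) = (x₃⁻¹ − x₁⁻¹) · (Ω(x₁,x₂)Ω(x₁,x₃) − Ω(x₁,x₃)Ω(x₂,x₃)) holds as rational functions. -/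
/-- The field `ℚ(t₁, t₂, x₁, x₂, x₃)` of rational functions in five variables. -/
abbrev RatF5 : Type := FractionRing (MvPolynomial (Fin 5) ℚ)

/-- The function `Ω(x,y) = y² / ((1 − y(x⁻¹ − t₁))(1 − y(x⁻¹ − t₂)))`. -/
noncomputable def OmegaFn5 (t1 t2 a b : RatF5) : RatF5 :=
  b ^ 2 / ((1 - b * (a⁻¹ - t1)) * (1 - b * (a⁻¹ - t2)))

open MvPolynomial in
lemma ratf5_map_ne (p : MvPolynomial (Fin 5) ℚ) (v : Fin 5 → ℚ)
    (h : eval v p ≠ 0) : algebraMap (MvPolynomial (Fin 5) ℚ) RatF5 p ≠ 0 := by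
  intro hp
  apply h
  have : p = 0 := IsFractionRing.injective (MvPolynomial (Fin 5) ℚ) RatF5
    (by simpa using hp)
  simp [this]

lemma omega_rw (t a b : RatF5) (ha : a ≠ 0) :
    1 - b * (a⁻¹ - t) = (a - b + t * (a * b)) * a⁻¹ := by
  field_simp
  ring

lemma frac_combL {K : Type*} [Field K] (s d a b c A B C t : K)
    (hA : A ≠ 0) (hB : B ≠ 0) (hC : C ≠ 0) (hd : d ≠ 0) :
    s / d * (a / A * (b / B) - t * (a / A * (b / B) * (c / C))) =
      s * (a * b * C - t * (a * b * c)) / (d * (A * B * C)) := by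
  simp only [div_mul_div_comm]
  rw [mul_div_assoc',
    div_sub_div _ _ (mul_ne_zero hA hB) (mul_ne_zero (mul_ne_zero hA hB) hC),
    div_mul_div_comm,
    div_eq_div_iff
      (mul_ne_zero hd (mul_ne_zero (mul_ne_zero hA hB)
        (mul_ne_zero (mul_ne_zero hA hB) hC)))
      (mul_ne_zero hd (mul_ne_zero (mul_ne_zero hA hB) hC))]
  ring

lemma frac_combR {K : Type*} [Field K] (s d a b c A B C : K)
    (hA : A ≠ 0) (hB : B ≠ 0) (hC : C ≠ 0) (hd : d ≠ 0) :
    s / d * (a / A * (c / C) - c / C * (b / B)) =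
      s * (c * (a * B - b * A)) / (d * (A * B * C)) := by
  rw [eq_div_iff (by simp [hA, hB, hC, hd])]
  field_simp

set_option maxHeartbeats 2000000 in
/-- In `ℚ(t₁, t₂, x₁, x₂, x₃)`, the identity
`(x₁⁻¹ − 2x₂⁻¹ + x₃⁻¹)(Ω(x₁,x₂)Ω(x₂,x₃) − t₁t₂ Ω(x₁,x₂)Ω(x₂,x₃)Ω(x₁,x₃))
  = (x₃⁻¹ − x₁⁻¹)(Ω(x₁,x₂)Ω(x₁,x₃) − Ω(x₁,x₃)Ω(x₂,x₃))` holds. -/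
theorem statement11 :
    let t1 : RatF5 := algebraMap (MvPolynomial (Fin 5) ℚ) RatF5 (MvPolynomial.X 0)
    let t2 : RatF5 := algebraMap (MvPolynomial (Fin 5) ℚ) RatF5 (MvPolynomial.X 1)
    let x1 : RatF5 := algebraMap (MvPolynomial (Fin 5) ℚ) RatF5 (MvPolynomial.X 2)
    let x2 : RatF5 := algebraMap (MvPolynomial (Fin 5) ℚ) RatF5 (MvPolynomial.X 3)
    let x3 : RatF5 := algebraMap (MvPolynomial (Fin 5) ℚ) RatF5 (MvPolynomial.X 4)
    (x1⁻¹ - 2 * x2⁻¹ + x3⁻¹) *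
        (OmegaFn5 t1 t2 x1 x2 * OmegaFn5 t1 t2 x2 x3 -
          t1 * t2 * (OmegaFn5 t1 t2 x1 x2 * OmegaFn5 t1 t2 x2 x3 * OmegaFn5 t1 t2 x1 x3)) =
      (x3⁻¹ - x1⁻¹) *
        (OmegaFn5 t1 t2 x1 x2 * OmegaFn5 t1 t2 x1 x3 -
          OmegaFn5 t1 t2 x1 x3 * OmegaFn5 t1 t2 x2 x3) := by
  intro t1 t2 x1 x2 x3
  have hx1 : x1 ≠ 0 := ratf5_map_ne _ ![0, 0, 1, 2, 3] (by simp)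
  have hx2 : x2 ≠ 0 := ratf5_map_ne _ ![0, 0, 1, 2, 3] (by simp)
  have hx3 : x3 ≠ 0 := ratf5_map_ne _ ![0, 0, 1, 2, 3] (by simp)
  have hA12 : x1 - x2 + t1 * (x1 * x2) ≠ 0 := by
    have := ratf5_map_ne (MvPolynomial.X 2 - MvPolynomial.X 3 +
      MvPolynomial.X 0 * (MvPolynomial.X 2 * MvPolynomial.X 3)) ![0, 0, 1, 2, 3]
      (by simp; norm_num)
    simpa [map_add, map_sub, map_mul] using this
  have hB12 : x1 - x2 + t2 * (x1 * x2) ≠ 0 := by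
    have := ratf5_map_ne (MvPolynomial.X 2 - MvPolynomial.X 3 +
      MvPolynomial.X 1 * (MvPolynomial.X 2 * MvPolynomial.X 3)) ![0, 0, 1, 2, 3]
      (by simp; norm_num)
    simpa [map_add, map_sub, map_mul] using this
  have hA13 : x1 - x3 + t1 * (x1 * x3) ≠ 0 := by
    have := ratf5_map_ne (MvPolynomial.X 2 - MvPolynomial.X 4 +
      MvPolynomial.X 0 * (MvPolynomial.X 2 * MvPolynomial.X 4)) ![0, 0, 1, 2, 3]
      (by simp; norm_num)
    simpa [map_add, map_sub, map_mul] using this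
  have hB13 : x1 - x3 + t2 * (x1 * x3) ≠ 0 := by
    have := ratf5_map_ne (MvPolynomial.X 2 - MvPolynomial.X 4 +
      MvPolynomial.X 1 * (MvPolynomial.X 2 * MvPolynomial.X 4)) ![0, 0, 1, 2, 3]
      (by simp; norm_num)
    simpa [map_add, map_sub, map_mul] using this
  have hA23 : x2 - x3 + t1 * (x2 * x3) ≠ 0 := by
    have := ratf5_map_ne (MvPolynomial.X 3 - MvPolynomial.X 4 +
      MvPolynomial.X 0 * (MvPolynomial.X 3 * MvPolynomial.X 4)) ![0, 0, 1, 2, 3]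
      (by simp; norm_num)
    simpa [map_add, map_sub, map_mul] using this
  have hB23 : x2 - x3 + t2 * (x2 * x3) ≠ 0 := by
    have := ratf5_map_ne (MvPolynomial.X 3 - MvPolynomial.X 4 +
      MvPolynomial.X 1 * (MvPolynomial.X 3 * MvPolynomial.X 4)) ![0, 0, 1, 2, 3]
      (by simp; norm_num)
    simpa [map_add, map_sub, map_mul] using this
  have e12 : OmegaFn5 t1 t2 x1 x2 =
      x2 ^ 2 * x1 ^ 2 / ((x1 - x2 + t1 * (x1 * x2)) * (x1 - x2 + t2 * (x1 * x2))) := by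
    unfold OmegaFn5
    rw [omega_rw t1 x1 x2 hx1, omega_rw t2 x1 x2 hx1]
    field_simp
  have e13 : OmegaFn5 t1 t2 x1 x3 =
      x3 ^ 2 * x1 ^ 2 / ((x1 - x3 + t1 * (x1 * x3)) * (x1 - x3 + t2 * (x1 * x3))) := by
    unfold OmegaFn5
    rw [omega_rw t1 x1 x3 hx1, omega_rw t2 x1 x3 hx1]
    field_simp
  have e23 : OmegaFn5 t1 t2 x2 x3 =
      x3 ^ 2 * x2 ^ 2 / ((x2 - x3 + t1 * (x2 * x3)) * (x2 - x3 + t2 * (x2 * x3))) := by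
    unfold OmegaFn5
    rw [omega_rw t1 x2 x3 hx2, omega_rw t2 x2 x3 hx2]
    field_simp
  have hS : x1⁻¹ - 2 * x2⁻¹ + x3⁻¹ = (x2 * x3 - 2 * (x1 * x3) + x1 * x2) / (x1 * (x2 * x3)) := by
    field_simp
  have hd : x3⁻¹ - x1⁻¹ = (x1 - x3) / (x1 * x3) := by
    rw [inv_sub_inv hx3 hx1, mul_comm x3 x1]
  rw [e12, e13, e23, hS, hd]
  rw [frac_combL _ _ _ _ _ _ _ _ _ (mul_ne_zero hA12 hB12) (mul_ne_zero hA23 hB23)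
      (mul_ne_zero hA13 hB13) (mul_ne_zero hx1 (mul_ne_zero hx2 hx3)),
    frac_combR _ _ _ _ _ _ _ _ (mul_ne_zero hA12 hB12) (mul_ne_zero hA23 hB23)
      (mul_ne_zero hA13 hB13) (mul_ne_zero hx1 hx3)]
  rw [div_eq_div_iff
    (mul_ne_zero (mul_ne_zero hx1 (mul_ne_zero hx2 hx3))
      (mul_ne_zero (mul_ne_zero (mul_ne_zero hA12 hB12) (mul_ne_zero hA23 hB23))
        (mul_ne_zero hA13 hB13)))
    (mul_ne_zero (mul_ne_zero hx1 hx3)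
      (mul_ne_zero (mul_ne_zero (mul_ne_zero hA12 hB12) (mul_ne_zero hA23 hB23))
        (mul_ne_zero hA13 hB13)))]
  ring
end

section
/- Let K be a field, a₁, …, a_N ∈ K pairwise distinct, b₁, …, b_M ∈ K, and define the 'difference alphabet' series Σ_{n∈ℤ} h_n t^n := Π_{k=1}^{M}(1 − t b_k) / Π_{j=1}^{N}(1 − t a_j) ∈ K[[t]] (so h_n = 0 for n < 0). Then for every m ≥ 0, Σ_{j=1}^{N} a_j^m · Π_{k=1}^{M}(a_j − b_k) / Π_{l ≠ j}(a_j − a_l) = h_{m − N + M + 1}. -/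
/-!
Put `A = ∏ⱼ (X - aⱼ)` and `F = X^m ∏ₖ (X - bₖ)`. Lagrange interpolation at the nodes `aⱼ`
identifies the left-hand side with the coefficient of `X^(N-1)` in `r = F mod A`. On the right,
`∏ₖ (1 - t bₖ) / ∏ⱼ (1 - t aⱼ)` is the quotient of the reversals `t^(m+M) F(1/t)` and
`t^N A(1/t)`. Splitting `F = A q + r`, the part `A q` contributes a polynomial of degree
`≤ m + M - N`, while `r` contributes `t^(m+M+1-N) · rev r / rev A`, whose coefficient of
`t^(m+M+1-N)` is the leading coefficient `r_{N-1}` because `rev A` has constant term `1`.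
-/

open PowerSeries Finset

theorem PowerSeries.prod_inv_distrib {K ι : Type*} [Field K] (s : Finset ι) (f : ι → K⟦X⟧) :
    ∏ i ∈ s, (f i)⁻¹ = (∏ i ∈ s, f i)⁻¹ := by
  classical
  induction s using Finset.induction_on with
  | empty => simp
  | insert i s hi ih => rw [prod_insert hi, prod_insert hi, ih, PowerSeries.mul_inv_rev, mul_comm]

namespace Polynomial

open Lagrange

theorem natDegree_le_sub_one_of_degree_lt {R : Type*} [Semiring R] {p : R[X]} {n : ℕ}
    (h : p.degree < n) : p.natDegree ≤ n - 1 := by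
  rcases eq_or_ne p 0 with rfl | hp
  · simp
  · have := (natDegree_lt_iff_degree_lt hp).2 h
    omega

section CommRing

variable {R : Type*} [CommRing R]

theorem reflect_X_sub_C (c : R) : reflect 1 (X - C c) = 1 - C c * X := by
  rw [reflect_sub, reflect_one_X, reflect_C, pow_one]

theorem reflect_nodal {ι : Type*} (s : Finset ι) (v : ι → R) :
    reflect #s (nodal s v) = ∏ i ∈ s, (1 - C (v i) * X) := by
  classical
  induction s using Finset.induction_on with
  | empty => simp
  | insert i s hi ih =>
    have hdeg : (nodal s v).natDegree ≤ #s := (natDegree_prod_le _ _).trans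
      (by simpa using mul_le_of_le_one_right (Nat.zero_le _) natDegree_X_le)
    rw [nodal_insert_eq_nodal hi, card_insert_of_notMem hi, add_comm, prod_insert hi,
      reflect_mul _ _ (natDegree_X_sub_C_le _) hdeg, reflect_X_sub_C, ih]

theorem coe_reflect_nodal {ι : Type*} (s : Finset ι) (v : ι → R) :
    (reflect #s (nodal s v) : R⟦X⟧) = ∏ i ∈ s, (1 - PowerSeries.C (v i) * PowerSeries.X) := by
  rw [reflect_nodal, ← coeToPowerSeries.ringHom_apply, map_prod]
  simp

end CommRing

variable {K : Type*} [Field K]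

theorem sum_eval_div_prod_sub_eq_coeff_modByMonic {ι : Type*} [DecidableEq ι] {s : Finset ι}
    {v : ι → K} (hvs : Set.InjOn v s) (F : K[X]) :
    ∑ i ∈ s, F.eval (v i) / ∏ j ∈ s.erase i, (v i - v j) =
      (F %ₘ nodal s v).coeff (#s - 1) := by
  have hdeg : (F %ₘ nodal s v).degree < #s := by
    simpa [degree_nodal] using degree_modByMonic_lt F (nodal_monic (s := s) (v := v))
  rw [coeff_eq_sum hvs hdeg]
  refine sum_congr rfl fun i hi => ?_
  rw [modByMonic_eq_sub_mul_div, eval_sub, eval_mul, eval_nodal_at_node hi, zero_mul, sub_zero]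

theorem constantCoeff_coe_reverse {A : K[X]} (hA : A.Monic) :
    PowerSeries.constantCoeff (A.reverse : K⟦X⟧) = 1 := by
  rw [← coeff_zero_eq_constantCoeff_apply, coeff_coe, coeff_zero_reverse, hA.leadingCoeff]

theorem coeff_coe_reflect_mul_inv_reverse_of_dvd {A G : K[X]} (hA : A.Monic) (hAG : A ∣ G)
    {d : ℕ} (hG : G.natDegree ≤ d) :
    PowerSeries.coeff (d + 1 - A.natDegree)
      ((reflect d G : K⟦X⟧) * (A.reverse : K⟦X⟧)⁻¹) = 0 := by
  obtain ⟨q, rfl⟩ := hAG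
  rcases eq_or_ne q 0 with rfl | hq
  · simp
  rw [hA.natDegree_mul' hq] at hG
  have hrefl : reflect d (A * q) = A.reverse * reflect (d - A.natDegree) q := by
    rw [reverse, ← reflect_mul A q le_rfl (by omega : q.natDegree ≤ d - A.natDegree),
      Nat.add_sub_cancel' (by omega)]
  rw [hrefl, coe_mul, mul_comm, ← mul_assoc,
    PowerSeries.inv_mul_cancel _ (by rw [constantCoeff_coe_reverse hA]; exact one_ne_zero),
    one_mul, coeff_coe, coeff_reflect, revAt_eq_self_of_lt (by omega)]
  exact coeff_eq_zero_of_natDegree_lt (by omega)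

theorem coeff_coe_reflect_mul_inv_reverse_of_degree_lt {A r : K[X]} (hA : A.Monic)
    (hr : r.degree < A.natDegree) {d : ℕ} (hAd : A.natDegree ≤ d + 1) :
    PowerSeries.coeff (d + 1 - A.natDegree) ((reflect d r : K⟦X⟧) * (A.reverse : K⟦X⟧)⁻¹) =
      r.coeff (A.natDegree - 1) := by
  rcases eq_or_ne r 0 with rfl | hr0
  · simp
  have hrA := (natDegree_lt_iff_degree_lt hr0).2 hr
  have hrefl : reflect d r = reflect (A.natDegree - 1) r * X ^ (d + 1 - A.natDegree) := by
    rw [← reflect_one, ← reflect_mul r 1 (by omega) (by simp), mul_one]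
    congr 1
    omega
  rw [hrefl, coe_mul, coe_pow, coe_X, mul_right_comm, PowerSeries.coeff_mul_X_pow',
    if_pos le_rfl, Nat.sub_self, coeff_zero_eq_constantCoeff_apply, map_mul, constantCoeff_inv,
    constantCoeff_coe_reverse hA, inv_one, mul_one, ← coeff_zero_eq_constantCoeff_apply,
    coeff_coe, coeff_reflect, revAt_le (Nat.zero_le _), Nat.sub_zero]

theorem coeff_coe_reflect_mul_inv_reverse {A F : K[X]} (hA : A.Monic) {d : ℕ}
    (hF : F.natDegree ≤ d) (hAd : A.natDegree ≤ d + 1) :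
    PowerSeries.coeff (d + 1 - A.natDegree) ((reflect d F : K⟦X⟧) * (A.reverse : K⟦X⟧)⁻¹) =
      (F %ₘ A).coeff (A.natDegree - 1) := by
  have hmod : (F %ₘ A).degree < A.natDegree := by
    simpa [degree_eq_natDegree hA.ne_zero] using degree_modByMonic_lt F hA
  have hdiv : (A * (F /ₘ A)).natDegree ≤ d := by
    have hmod' : (F %ₘ A).natDegree ≤ d :=
      (natDegree_le_sub_one_of_degree_lt hmod).trans (by omega)
    rw [eq_sub_of_add_eq' (modByMonic_add_div F A)]
    exact (natDegree_sub_le_of_le hF hmod').trans (max_self d).le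
  conv_lhs => rw [← modByMonic_add_div F A]
  rw [reflect_add, coe_add, add_mul, map_add,
    coeff_coe_reflect_mul_inv_reverse_of_degree_lt hA hmod hAd,
    coeff_coe_reflect_mul_inv_reverse_of_dvd hA (dvd_mul_right _ _) hdiv, add_zero]

end Polynomial

open Polynomial Lagrange in
/-- Let `K` be a field, `a₁, …, a_N ∈ K` pairwise distinct, `b₁, …, b_M ∈ K`, and define
`h_n` by `Σ_{n∈ℤ} h_n t^n = Π_{k=1}^{M}(1 − t b_k) / Π_{j=1}^{N}(1 − t a_j)` in `K[[t]]`
(so `h_n = 0` for `n < 0`).  Then for every `m ≥ 0`,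
`Σ_{j=1}^{N} a_j^m Π_{k=1}^{M}(a_j − b_k) / Π_{l ≠ j}(a_j − a_l) = h_{m − N + M + 1}`. -/
theorem statement13 {K : Type*} [Field K] (N M : ℕ) (a : Fin N → K)
    (ha : Function.Injective a) (b : Fin M → K) (m : ℕ) :
    (∑ j : Fin N,
        a j ^ m * (∏ k : Fin M, (a j - b k)) /
          ∏ l ∈ (Finset.univ : Finset (Fin N)).erase j, (a j - a l)) =
      (if N ≤ m + M + 1 then
        PowerSeries.coeff (R := K) (m + M + 1 - N)
          ((∏ k : Fin M, (1 - PowerSeries.C (R := K) (b k) * PowerSeries.X)) *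
            ∏ j : Fin N, (1 - PowerSeries.C (R := K) (a j) * PowerSeries.X)⁻¹)
      else 0) := by
  set A : K[X] := nodal univ a
  set F : K[X] := Polynomial.X ^ m * nodal univ b
  have hA : A.natDegree = N := by simp [A, natDegree_nodal]
  have hF : F.natDegree = m + M := by
    rw [(monic_X_pow m).natDegree_mul nodal_monic, natDegree_X_pow, natDegree_nodal, card_univ,
      Fintype.card_fin]
  have hsum : (∑ j : Fin N, a j ^ m * (∏ k : Fin M, (a j - b k)) /
      ∏ l ∈ univ.erase j, (a j - a l)) = (F %ₘ A).coeff (N - 1) := by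
    simpa [F, eval_nodal] using sum_eval_div_prod_sub_eq_coeff_modByMonic (s := univ) ha.injOn F
  have hnum : ∏ k : Fin M, (1 - PowerSeries.C (b k) * PowerSeries.X) =
      (reflect (m + M) F : K⟦X⟧) := by
    rw [reflect_mul _ _ (natDegree_X_pow_le m) (by simp [natDegree_nodal]), reflect_monomial,
      revAt_le le_rfl, Nat.sub_self, pow_zero, one_mul]
    simpa using (coe_reflect_nodal univ b).symm
  have hden : ∏ j : Fin N, (1 - PowerSeries.C (a j) * PowerSeries.X)⁻¹ =
      (A.reverse : K⟦X⟧)⁻¹ := by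
    rw [PowerSeries.prod_inv_distrib, reverse, hA]
    simpa using congrArg (·⁻¹) (coe_reflect_nodal univ a).symm
  rw [hsum, hnum, hden]
  split_ifs with hN
  · rw [← hA]
    exact (coeff_coe_reflect_mul_inv_reverse nodal_monic hF.le (hA.trans_le hN)).symm
  · rw [(modByMonic_eq_self_iff nodal_monic).2
      (degree_lt_degree ((hF.trans_lt (by omega)).trans_eq hA.symm))]
    exact coeff_eq_zero_of_natDegree_lt (by omega)
end

section
/- Let A be an associative ℚ-algebra with elements L₊, L₋, L₀, q₁, q₋₁, and a central element c. Define q_{±(m+1)} := (1/m)[L_±, q_{±m}] for m ≥ 1. Assume: [q₁, q₋₁] = c; [L₊, q₋₁] and [L₋, q₁] are central; [L₀, L_±] = ±L_±; [L₊, L₋] − 2L₀ is central; and [L₀, q_{±1}] = ±q_{±1}. Then for all m, n ≥ 1: [L₀, q_{±n}] = ±n·q_{±n}, [L₊, q_{−n}] = −n·q_{−(n−1)} for n ≥ 2, and [q_m, q_{−n}] = m·δ_{m,n}·c. -/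
/-- The sequence `q₁, q₂, q₃, …` defined by `q_{m+1} := (1/m)[L, q_m]` for `m ≥ 1`,
starting from a given element `q₁` (the value at `0` is irrelevant). Here `⁅a,b⁆ = ab − ba`. -/
noncomputable def qSeq {A : Type*} [Ring A] [Algebra ℚ A] (L q1 : A) : ℕ → A
  | 0 => 0
  | 1 => q1
  | (m + 2) => ((m + 1 : ℚ))⁻¹ • ⁅L, qSeq L q1 (m + 1)⁆

/-!
Every identity is proved by induction along the recursion `n • q_{n+1} = ⁅L, q_n⁆`
(`lie_qSeq`), expanding with the Jacobi identity and cancelling the factor `n` in the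
`ℚ`-algebra; since `qSeq L q 0 = 0`, most identities hold for all `n`, which keeps the
inductions free of side conditions. The `L₀`-grading is an eigenvalue computation, and the
lowering relation uses that `⁅L₊, L₋⁆` acts as `2 ad L₀`. For the Heisenberg relations,
`⁅L₊, ⁅q_m, q_{-n}⁆⁆ = 0` by induction, so `m • ⁅q_{m+1}, q_{-n}⁆ = -⁅q_m, ⁅L₊, q_{-n}⁆⁆`, and the
lowering relation reduces this to `⁅q_m, q_{-(n-1)}⁆`; the base case `⁅q₁, q_{-n}⁆` vanishes for
`n ≥ 2` because `⁅L₋, q₁⁆` and `c` are central.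
-/

section

attribute [local instance] LieRing.ofAssociativeRing

variable {A : Type*} [Ring A]

theorem lie_lie_eq_two_smul_lie {X Y H : A} (h : ∀ a, Commute (⁅X, Y⁆ - 2 • H) a) (a : A) :
    ⁅⁅X, Y⁆, a⁆ = 2 • ⁅H, a⁆ := by
  have := commute_iff_lie_eq.mp (h a)
  rwa [sub_lie, sub_eq_zero, two_nsmul, add_lie, ← two_nsmul] at this

variable [Algebra ℚ A]

theorem lie_qSeq (L q : A) (n : ℕ) : ⁅L, qSeq L q n⁆ = (n : ℚ) • qSeq L q (n + 1) := by
  rcases n with _ | n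
  · simp [qSeq]
  · rw [qSeq]
    push_cast
    rw [smul_inv_smul₀ (by positivity)]

theorem lie_qSeq_eq_smul_of_lie_eq_smul {H L q : A} {ε : ℚ} (hL : ⁅H, L⁆ = ε • L)
    (hq : ⁅H, q⁆ = ε • q) (n : ℕ) : ⁅H, qSeq L q n⁆ = (ε * n) • qSeq L q n := by
  induction n with
  | zero => simp [qSeq]
  | succ n ih =>
    rcases eq_or_ne n 0 with rfl | hn
    · simpa [qSeq] using hq
    · rw [← smul_right_inj (Nat.cast_ne_zero.mpr hn : (n : ℚ) ≠ 0), ← lie_smul, ← lie_qSeq,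
        leibniz_lie, hL, ih, smul_lie, lie_smul, lie_qSeq]
      push_cast
      module

theorem lie_qSeq_succ_eq_neg_smul {Lp Lm H q : A} (hq : ∀ a, Commute ⁅Lp, q⁆ a)
    (hLL : ∀ a, Commute (⁅Lp, Lm⁆ - 2 • H) a) (hHL : ⁅H, Lm⁆ = -Lm) (hHq : ⁅H, q⁆ = -q)
    {n : ℕ} (hn : 1 ≤ n) :
    ⁅Lp, qSeq Lm q (n + 1)⁆ = -(((n + 1 : ℕ) : ℚ) • qSeq Lm q n) := by
  have hH (k : ℕ) : ⁅H, qSeq Lm q k⁆ = -((k : ℚ) • qSeq Lm q k) := by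
    rw [lie_qSeq_eq_smul_of_lie_eq_smul (ε := -1) (by rw [hHL, neg_one_smul])
      (by rw [hHq, neg_one_smul]), neg_one_mul, neg_smul]
  induction n, hn using Nat.le_induction with
  | base =>
    have h2 : qSeq Lm q 2 = ⁅Lm, q⁆ := by simp [qSeq]
    rw [h2, leibniz_lie, lie_lie_eq_two_smul_lie hLL, commute_iff_lie_eq.mp ((hq Lm).symm), hHq]
    simp only [qSeq]
    module
  | succ n hn ih =>
    have hn' : ((n + 1 : ℕ) : ℚ) ≠ 0 := Nat.cast_ne_zero.mpr (by omega)
    rw [← smul_right_inj hn', ← lie_smul, ← lie_qSeq, leibniz_lie, lie_lie_eq_two_smul_lie hLL,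
      hH, ih, lie_neg, lie_smul, lie_qSeq]
    push_cast
    module

theorem lie_qSeq_eq_ite {Lm q q' c : A} (hc : ∀ a, Commute c a)
    (hqq' : ⁅q, q'⁆ = c) (hLq : ∀ a, Commute ⁅Lm, q⁆ a) (n : ℕ) :
    ⁅q, qSeq Lm q' n⁆ = if n = 1 then c else 0 := by
  induction n with
  | zero => simp [qSeq]
  | succ n ih =>
    rcases eq_or_ne n 0 with rfl | hn
    · simpa [qSeq] using hqq'
    · have hqLm : ⁅⁅q, Lm⁆, qSeq Lm q' n⁆ = 0 := by
        rw [← lie_skew q Lm, neg_lie, commute_iff_lie_eq.mp (hLq _), neg_zero]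
      have hLm : ⁅Lm, ⁅q, qSeq Lm q' n⁆⁆ = 0 := by
        rw [ih]
        split_ifs
        · exact commute_iff_lie_eq.mp (hc Lm).symm
        · exact lie_zero Lm
      rw [if_neg (by omega), ← smul_right_inj (Nat.cast_ne_zero.mpr hn : (n : ℚ) ≠ 0), smul_zero,
        ← lie_smul, ← lie_qSeq, leibniz_lie, hqLm, hLm, add_zero]

theorem lie_qSeq_qSeq_eq_ite {Lp Lm q q' c : A} (hc : ∀ a, Commute c a) (hqq' : ⁅q, q'⁆ = c)
    (hLq' : ∀ a, Commute ⁅Lp, q'⁆ a) (hLq : ∀ a, Commute ⁅Lm, q⁆ a)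
    (hlower : ∀ n, 1 ≤ n → ⁅Lp, qSeq Lm q' (n + 1)⁆ = -(((n + 1 : ℕ) : ℚ) • qSeq Lm q' n))
    (m n : ℕ) : ⁅qSeq Lp q m, qSeq Lm q' n⁆ = if m = n then (m : ℚ) • c else 0 := by
  induction m generalizing n with
  | zero => simp [qSeq]
  | succ m ih =>
    rcases eq_or_ne m 0 with rfl | hm
    · simpa [qSeq, eq_comm] using lie_qSeq_eq_ite hc hqq' hLq n
    have hLc : ⁅Lp, ⁅qSeq Lp q m, qSeq Lm q' n⁆⁆ = 0 := by
      rw [ih]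
      split_ifs
      · rw [lie_smul, commute_iff_lie_eq.mp (hc Lp).symm, smul_zero]
      · exact lie_zero Lp
    rw [← smul_right_inj (Nat.cast_ne_zero.mpr hm : (m : ℚ) ≠ 0), ← smul_lie, ← lie_qSeq, lie_lie,
      hLc, zero_sub]
    rcases n with _ | _ | n
    · simp [qSeq]
    · simp [qSeq, commute_iff_lie_eq.mp (hLq' _).symm, hm]
    · rw [hlower (n + 1) (by omega), lie_neg, lie_smul, ih, neg_neg]
      split_ifs with h h' h'
      · subst h
        push_cast
        module
      · omega
      · omega
      · rw [smul_zero, smul_zero]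

end

/-- Let `A` be an associative `ℚ`-algebra with elements `L₊, L₋, L₀, q₁, q₋₁` and a central
element `c`, and define `q_{±(m+1)} := (1/m)[L_±, q_{±m}]` for `m ≥ 1`. Assume
`[q₁, q₋₁] = c`; `[L₊, q₋₁]` and `[L₋, q₁]` are central; `[L₀, L_±] = ±L_±`;
`[L₊, L₋] − 2L₀` is central; and `[L₀, q_{±1}] = ±q_{±1}`. Then for all `m, n ≥ 1`:
`[L₀, q_{±n}] = ±n q_{±n}`, `[L₊, q_{−n}] = −n q_{−(n−1)}` for `n ≥ 2`, and
`[q_m, q_{−n}] = m δ_{m,n} c`. -/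
theorem statement16 {A : Type*} [Ring A] [Algebra ℚ A]
    (Lp Lm L0 q1 qm1 c : A)
    (hc : ∀ a : A, c * a = a * c)
    (h1 : ⁅q1, qm1⁆ = c)
    (h2p : ∀ a : A, ⁅Lp, qm1⁆ * a = a * ⁅Lp, qm1⁆)
    (h2m : ∀ a : A, ⁅Lm, q1⁆ * a = a * ⁅Lm, q1⁆)
    (h3p : ⁅L0, Lp⁆ = Lp) (h3m : ⁅L0, Lm⁆ = -Lm)
    (h4 : ∀ a : A, (⁅Lp, Lm⁆ - 2 • L0) * a = a * (⁅Lp, Lm⁆ - 2 • L0))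
    (h5p : ⁅L0, q1⁆ = q1) (h5m : ⁅L0, qm1⁆ = -qm1) :
    (∀ n : ℕ, 1 ≤ n →
      ⁅L0, qSeq Lp q1 n⁆ = (n : ℚ) • qSeq Lp q1 n ∧
      ⁅L0, qSeq Lm qm1 n⁆ = -((n : ℚ) • qSeq Lm qm1 n)) ∧
    (∀ n : ℕ, 2 ≤ n →
      ⁅Lp, qSeq Lm qm1 n⁆ = -((n : ℚ) • qSeq Lm qm1 (n - 1))) ∧
    (∀ m n : ℕ, 1 ≤ m → 1 ≤ n →
      ⁅qSeq Lp q1 m, qSeq Lm qm1 n⁆ = if m = n then (m : ℚ) • c else 0) := by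
  have hHp (n : ℕ) : ⁅L0, qSeq Lp q1 n⁆ = (n : ℚ) • qSeq Lp q1 n := by
    simpa using lie_qSeq_eq_smul_of_lie_eq_smul (h3p.trans (one_smul ℚ Lp).symm)
      (h5p.trans (one_smul ℚ q1).symm) n
  have hHm (n : ℕ) : ⁅L0, qSeq Lm qm1 n⁆ = -((n : ℚ) • qSeq Lm qm1 n) := by
    simpa using lie_qSeq_eq_smul_of_lie_eq_smul (h3m.trans (neg_one_smul ℚ Lm).symm)
      (h5m.trans (neg_one_smul ℚ qm1).symm) n
  have hlower (n : ℕ) (hn : 1 ≤ n) := lie_qSeq_succ_eq_neg_smul h2p h4 h3m h5m hn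
  refine ⟨fun n _ => ⟨hHp n, hHm n⟩, fun n hn => ?_,
    fun m n _ _ => lie_qSeq_qSeq_eq_ite hc h1 h2p h2m hlower m n⟩
  obtain ⟨n, rfl⟩ : ∃ k, n = k + 1 := ⟨n - 1, by omega⟩
  simpa using hlower n (by omega)
end
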